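/- Let P ∈ ℝ^{m×n} be an entrywise nonnegative matrix whose entries sum to 1, with p* = max(max_i Σ_j P_{i,j}, max_j Σ_i P_{i,j}). Then for all matrices A ∈ ℝ^{m×d}, M ∈ ℝ^{d×d}, B ∈ ℝ^{n×d}, the P-weighted entrywise absolute sum satisfies Σ_{i,j} P_{i,j} · |(A M B^⊤)_{i,j}| ≤ p* · ‖A‖ · ‖M‖_* · ‖B‖, where ‖·‖ is the spectral norm and ‖·‖_* is the nuclear norm. -/

import Mathlib

open Matrix Finset
open scoped BigOperators

/-!
Let `v₁, …, v_d` be an orthonormal eigenbasis of `MᵀM`, so that `‖M vₖ‖ = √λₖ` are the singular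
values of `M` and `M = ∑ₖ (M vₖ) vₖᵀ`. Then `A M Bᵀ = ∑ₖ (A M vₖ)(B vₖ)ᵀ` is a sum of rank-one
matrices. For a rank-one matrix `x yᵀ`, Cauchy–Schwarz with weights `P i j` bounds
`∑ P i j |x i y j|` by the geometric mean of `∑ᵢ rᵢ xᵢ²` and `∑ⱼ cⱼ yⱼ²`, where `r` and `c` are the
marginals of `P`; both are at most `p*` times a squared norm. With `‖A M vₖ‖ ≤ ‖A‖ √λₖ` and
`‖B vₖ‖ ≤ ‖B‖`, summing over `k` gives `p* ‖A‖ ‖M‖_* ‖B‖`.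
-/

/-- Spectral norm (largest singular value) of a real matrix. -/
noncomputable def specNorm {m n : ℕ} (A : Matrix (Fin m) (Fin n) ℝ) : ℝ :=
  ‖LinearMap.toContinuousLinearMap (Matrix.toEuclideanLin A)‖

/-- Nuclear norm (sum of singular values) of a real matrix. -/
noncomputable def nuclearNorm {m n : ℕ} (A : Matrix (Fin m) (Fin n) ℝ) : ℝ :=
  ∑ j, Real.sqrt ((Matrix.isHermitian_conjTranspose_mul_self A).eigenvalues j)

section WeightedAbsSum

variable {ι κ : Type*} [Fintype ι] [Fintype κ] {P : ι → κ → ℝ}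

theorem sum_sum_mul_abs_sum_le_sum {α : Type*} (s : Finset α) (hP : ∀ i j, 0 ≤ P i j)
    (f : α → ι → κ → ℝ) :
    ∑ i, ∑ j, P i j * |∑ k ∈ s, f k i j| ≤ ∑ k ∈ s, ∑ i, ∑ j, P i j * |f k i j| := by
  calc ∑ i, ∑ j, P i j * |∑ k ∈ s, f k i j|
      ≤ ∑ i, ∑ j, ∑ k ∈ s, P i j * |f k i j| := by
        gcongr with i _ j _
        rw [← mul_sum]
        exact mul_le_mul_of_nonneg_left (abs_sum_le_sum_abs _ _) (hP i j)
    _ = ∑ k ∈ s, ∑ i, ∑ j, P i j * |f k i j| := by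
        simp only [sum_comm (γ := α)]

theorem sum_sum_mul_abs_mul_le_mul_norm_mul_norm {p : ℝ} (hP : ∀ i j, 0 ≤ P i j)
    (hrow : ∀ i, ∑ j, P i j ≤ p) (hcol : ∀ j, ∑ i, P i j ≤ p) (hp : 0 ≤ p)
    (x : EuclideanSpace ℝ ι) (y : EuclideanSpace ℝ κ) :
    ∑ i, ∑ j, P i j * |x i * y j| ≤ p * ‖x‖ * ‖y‖ := by
  have cauchySchwarz : (∑ i, ∑ j, P i j * |x i * y j|) ^ 2 ≤
      (∑ i, ∑ j, P i j * x i ^ 2) * ∑ i, ∑ j, P i j * y j ^ 2 := by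
    simp only [← Fintype.sum_prod_type']
    refine sum_sq_le_sum_mul_sum_of_sq_le_mul _ (fun _ _ => mul_nonneg (hP ..) (sq_nonneg _))
      (fun _ _ => mul_nonneg (hP ..) (sq_nonneg _)) fun _ _ => le_of_eq ?_
    rw [mul_pow, sq_abs]
    ring
  have hx : ∑ i, ∑ j, P i j * x i ^ 2 ≤ p * ‖x‖ ^ 2 := by
    simp only [← sum_mul, EuclideanSpace.real_norm_sq_eq, mul_sum]
    gcongr with i
    exact hrow i
  have hy : ∑ i, ∑ j, P i j * y j ^ 2 ≤ p * ‖y‖ ^ 2 := by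
    simp only [sum_comm (γ := ι), ← sum_mul, EuclideanSpace.real_norm_sq_eq, mul_sum]
    gcongr with j
    exact hcol j
  refine (abs_le_of_sq_le_sq' ?_ (by positivity)).2
  calc _ ≤ (p * ‖x‖ ^ 2) * (p * ‖y‖ ^ 2) :=
        cauchySchwarz.trans (mul_le_mul hx hy
          (sum_nonneg fun i _ => sum_nonneg fun j _ => mul_nonneg (hP ..) (sq_nonneg _))
          (by positivity))
    _ = (p * ‖x‖ * ‖y‖) ^ 2 := by ring

end WeightedAbsSum

namespace Matrix

theorem sum_vecMulVec_orthonormalBasis {𝕜 n : Type*} [RCLike 𝕜] [Fintype n] [DecidableEq n]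
    (b : OrthonormalBasis n 𝕜 (EuclideanSpace 𝕜 n)) :
    ∑ k, vecMulVec (b k).ofLp (star (b k).ofLp) = 1 := by
  have hU := mem_unitaryGroup_iff.mp
    ((EuclideanSpace.basisFun n 𝕜).toMatrix_orthonormalBasis_mem_unitary b)
  ext i j
  simp [← hU, mul_apply, Module.Basis.toMatrix_apply, vecMulVec_apply, sum_apply]

theorem eq_sum_vecMulVec_mulVec_orthonormalBasis {𝕜 m n : Type*} [RCLike 𝕜] [Fintype n]
    [DecidableEq n] (M : Matrix m n 𝕜) (b : OrthonormalBasis n 𝕜 (EuclideanSpace 𝕜 n)) :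
    M = ∑ k, vecMulVec (M *ᵥ b k) (star (b k).ofLp) := by
  conv_lhs => rw [← Matrix.mul_one M, ← sum_vecMulVec_orthonormalBasis b, Matrix.mul_sum]
  simp only [mul_vecMulVec]

theorem mul_mul_transpose_eq_sum_vecMulVec {l n o : Type*} [Fintype n] [Fintype o]
    [DecidableEq n] (A : Matrix l n ℝ) (M : Matrix n n ℝ) (B : Matrix o n ℝ)
    (b : OrthonormalBasis n ℝ (EuclideanSpace ℝ n)) :
    A * M * Bᵀ = ∑ k, vecMulVec (A *ᵥ (M *ᵥ b k)) (B *ᵥ b k) := by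
  conv_lhs => rw [eq_sum_vecMulVec_mulVec_orthonormalBasis M b]
  simp only [Matrix.mul_sum, Matrix.sum_mul, mul_vecMulVec, vecMulVec_mul, vecMul_transpose,
    star_trivial]

theorem norm_toEuclideanLin_eigenvectorBasis {𝕜 m n : Type*} [RCLike 𝕜] [Fintype m]
    [Fintype n] [DecidableEq n] (M : Matrix m n 𝕜) (k : n) :
    ‖toEuclideanLin M ((isHermitian_conjTranspose_mul_self M).eigenvectorBasis k)‖ =
      √((isHermitian_conjTranspose_mul_self M).eigenvalues k) := by
  rw [← Real.sqrt_sq (norm_nonneg _), IsHermitian.eigenvalues_eq, ← mulVec_mulVec,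
    dotProduct_mulVec, ← star_mulVec, dotProduct_comm, ← EuclideanSpace.inner_eq_star_dotProduct]
  simp only [toLpLin_apply, inner_self_eq_norm_sq_to_K, RCLike.re_ofReal_pow]

end Matrix

theorem norm_toEuclideanLin_le_specNorm_mul {m n : ℕ} (A : Matrix (Fin m) (Fin n) ℝ)
    (x : EuclideanSpace ℝ (Fin n)) : ‖toEuclideanLin A x‖ ≤ specNorm A * ‖x‖ :=
  (LinearMap.toContinuousLinearMap (toEuclideanLin A)).le_opNorm x

theorem sum_sum_mul_abs_mul_mul_transpose_le {m n d : ℕ} {P : Matrix (Fin m) (Fin n) ℝ} {p : ℝ}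
    (hP : ∀ i j, 0 ≤ P i j) (hrow : ∀ i, ∑ j, P i j ≤ p) (hcol : ∀ j, ∑ i, P i j ≤ p)
    (hp : 0 ≤ p) (A : Matrix (Fin m) (Fin d) ℝ) (M : Matrix (Fin d) (Fin d) ℝ)
    (B : Matrix (Fin n) (Fin d) ℝ) :
    ∑ i, ∑ j, P i j * |(A * M * Bᵀ) i j| ≤ p * specNorm A * nuclearNorm M * specNorm B := by
  set hM := isHermitian_conjTranspose_mul_self M
  set v := hM.eigenvectorBasis
  have hterm k : ∑ i, ∑ j, P i j * |(A *ᵥ (M *ᵥ v k)) i * (B *ᵥ v k) j| ≤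
      p * (specNorm A * √(hM.eigenvalues k)) * specNorm B := by
    have hA : ‖toEuclideanLin A (toEuclideanLin M (v k))‖ ≤ specNorm A * √(hM.eigenvalues k) := by
      rw [← norm_toEuclideanLin_eigenvectorBasis]
      exact norm_toEuclideanLin_le_specNorm_mul A _
    have hB : ‖toEuclideanLin B (v k)‖ ≤ specNorm B :=
      (norm_toEuclideanLin_le_specNorm_mul B _).trans_eq (by rw [v.norm_eq_one, mul_one])
    calc _ ≤ p * ‖toEuclideanLin A (toEuclideanLin M (v k))‖ * ‖toEuclideanLin B (v k)‖ := by
          simpa only [ofLp_toLpLin, toLin'_apply] using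
            sum_sum_mul_abs_mul_le_mul_norm_mul_norm hP hrow hcol hp
              (toEuclideanLin A (toEuclideanLin M (v k))) (toEuclideanLin B (v k))
      _ ≤ _ := mul_le_mul (mul_le_mul_of_nonneg_left hA hp) hB (norm_nonneg _)
          (mul_nonneg hp (mul_nonneg (norm_nonneg _) (Real.sqrt_nonneg _)))
  calc ∑ i, ∑ j, P i j * |(A * M * Bᵀ) i j|
      ≤ ∑ k, ∑ i, ∑ j, P i j * |(A *ᵥ (M *ᵥ v k)) i * (B *ᵥ v k) j| := by
        simpa only [mul_mul_transpose_eq_sum_vecMulVec A M B v, Matrix.sum_apply, vecMulVec_apply] using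
          sum_sum_mul_abs_sum_le_sum univ hP _
    _ ≤ ∑ k, p * (specNorm A * √(hM.eigenvalues k)) * specNorm B := sum_le_sum fun k _ => hterm k
    _ = p * specNorm A * nuclearNorm M * specNorm B := by
        simp only [nuclearNorm, mul_sum, sum_mul]
        exact sum_congr rfl fun k _ => by ring

theorem weighted_abs_sum_le_pstar_spec_nuclear_general {m n d : ℕ}
    (P : Matrix (Fin m) (Fin n) ℝ)
    (hPnonneg : ∀ i j, 0 ≤ P i j)
    (pstar : ℝ)
    (hpstar : pstar = max (⨆ i : Fin m, ∑ j, P i j) (⨆ j : Fin n, ∑ i, P i j))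
    (A : Matrix (Fin m) (Fin d) ℝ) (Mmat : Matrix (Fin d) (Fin d) ℝ)
    (B : Matrix (Fin n) (Fin d) ℝ) :
    ∑ i, ∑ j, P i j * |(A * Mmat * Bᵀ) i j| ≤
      pstar * specNorm A * nuclearNorm Mmat * specNorm B := by
  have hrow i : ∑ j, P i j ≤ pstar :=
    hpstar ▸ le_max_of_le_left (Finite.le_ciSup (fun i => ∑ j, P i j) i)
  have hcol j : ∑ i, P i j ≤ pstar :=
    hpstar ▸ le_max_of_le_right (Finite.le_ciSup (fun j => ∑ i, P i j) j)
  have hp : 0 ≤ pstar :=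
    hpstar ▸ le_max_of_le_left (Real.iSup_nonneg fun i => sum_nonneg fun j _ => hPnonneg i j)
  exact sum_sum_mul_abs_mul_mul_transpose_le hPnonneg hrow hcol hp A Mmat B

/-- For an entrywise nonnegative matrix `P` with entries summing to `1` and
`p* = max (max_i Σ_j P_{i,j}) (max_j Σ_i P_{i,j})`, and any matrices `A ∈ ℝ^{m×d}`,
`M ∈ ℝ^{d×d}`, `B ∈ ℝ^{n×d}`:
`Σ_{i,j} P_{i,j} |(A M Bᵀ)_{i,j}| ≤ p* ‖A‖ ‖M‖_* ‖B‖`. -/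
theorem weighted_abs_sum_le_pstar_spec_nuclear {m n d : ℕ} (hm : 0 < m) (hn : 0 < n)
    (P : Matrix (Fin m) (Fin n) ℝ)
    (hPnonneg : ∀ i j, 0 ≤ P i j)
    (hPsum : ∑ i, ∑ j, P i j = 1)
    (pstar : ℝ)
    (hpstar : pstar = max (⨆ i : Fin m, ∑ j, P i j) (⨆ j : Fin n, ∑ i, P i j))
    (A : Matrix (Fin m) (Fin d) ℝ) (Mmat : Matrix (Fin d) (Fin d) ℝ)
    (B : Matrix (Fin n) (Fin d) ℝ) :
    ∑ i, ∑ j, P i j * |(A * Mmat * Bᵀ) i j| ≤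
      pstar * specNorm A * nuclearNorm Mmat * specNorm B :=
  weighted_abs_sum_le_pstar_spec_nuclear_general P hPnonneg pstar hpstar A Mmat B
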